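/- For every x ∈ X, every t ∈ {0,…,k}, and all v, v′ ∈ ℝ, |V(x,t,v) − V(x,t,v′)| ≤ |v − v′|; that is, each map v ↦ V(x,t,v) is 1-Lipschitz. -/

import Mathlib

/-! Backward induction on `t`: at `t = k` the map `v ↦ V x k v` is a translation, and the
Bellman step preserves 1-Lipschitz dependence on `v`, since `min`, `Finset.inf'` and
averaging against probability weights are non-expansive in the sup norm and the discount
factor `γ ≤ 1` only shrinks differences. -/

theorem Finset.abs_inf'_sub_inf'_le {ι α : Type*} [AddCommGroup α] [LinearOrder α]
    [IsOrderedAddMonoid α] {s : Finset ι} (hs : s.Nonempty) {f f' : ι → α} {M : α}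
    (hff' : ∀ i ∈ s, |f i - f' i| ≤ M) : |s.inf' hs f - s.inf' hs f'| ≤ M := by
  rw [abs_sub_le_iff]
  constructor <;> rw [sub_le_comm] <;> refine Finset.le_inf' hs _ fun i hi => ?_
  · exact (sub_le_sub_right (Finset.inf'_le f hi) M).trans
      (sub_le_comm.mp (abs_sub_le_iff.mp (hff' i hi)).1)
  · exact (sub_le_sub_right (Finset.inf'_le f' hi) M).trans
      (sub_le_comm.mp (abs_sub_le_iff.mp (hff' i hi)).2)

theorem abs_weightedSum_sub_weightedSum_le {ι : Type*} {s : Finset ι} {p f f' : ι → ℝ}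
    {M : ℝ} (hp : ∀ i ∈ s, 0 ≤ p i) (hp1 : ∑ i ∈ s, p i = 1)
    (hff' : ∀ i ∈ s, |f i - f' i| ≤ M) :
    |∑ i ∈ s, p i * f i - ∑ i ∈ s, p i * f' i| ≤ M :=
  calc |∑ i ∈ s, p i * f i - ∑ i ∈ s, p i * f' i|
      = |∑ i ∈ s, p i * (f i - f' i)| := by simp only [mul_sub, Finset.sum_sub_distrib]
    _ ≤ ∑ i ∈ s, |p i * (f i - f' i)| := Finset.abs_sum_le_sum_abs _ _
    _ ≤ ∑ i ∈ s, p i * M := Finset.sum_le_sum fun i hi => by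
        rw [abs_mul, abs_of_nonneg (hp i hi)]
        exact mul_le_mul_of_nonneg_left (hff' i hi) (hp i hi)
    _ = M := by rw [← Finset.sum_mul, hp1, one_mul]

theorem abs_add_mul_sub_add_mul_le {a b c γ M : ℝ} (hγ0 : 0 ≤ γ) (hγ1 : γ ≤ 1)
    (hbc : |b - c| ≤ M) : |a + γ * b - (a + γ * c)| ≤ M :=
  calc |a + γ * b - (a + γ * c)| = γ * |b - c| := by
        rw [add_sub_add_left_eq_sub, ← mul_sub, abs_mul, abs_of_nonneg hγ0]
    _ ≤ 1 * M := mul_le_mul hγ1 hbc (abs_nonneg _) zero_le_one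
    _ = M := one_mul M

theorem V_one_lipschitz_general
    {W : Type*} [Fintype W] (p : W → ℝ)
    (hp : ∀ w, 0 ≤ p w) (hp1 : ∑ w, p w = 1)
    {X : Type*}
    {U : Type*} [Fintype U] [Nonempty U]
    (k : ℕ)
    (γ : ℝ) (hγ0 : 0 ≤ γ) (hγ1 : γ < 1)
    (h : X → ℕ → U → W → X)
    (g : X → ℕ → U → W → ℝ)
    (s : X → ℕ → W → ℝ)
    (V : X → ℕ → ℝ → ℝ)
    (hVk : ∀ x v, V x k v = v + ∑ w, p w * s x k w)
    (hVt : ∀ x t v, t < k →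
      V x t v = min (v + ∑ w, p w * s x t w)
        (Finset.univ.inf' Finset.univ_nonempty
          (fun u : U => ∑ w, p w * (g x t u w + γ * V (h x t u w) (t + 1) v))))
     :
    ∀ x : X, ∀ t ≤ k, ∀ v v' : ℝ, |V x t v - V x t v'| ≤ |v - v'| := by
  intro x t ht
  induction ht using Nat.decreasingInduction generalizing x with
  | self => intro v v'; simp only [hVk, add_sub_add_right_eq_sub, le_refl]
  | of_succ t htk ih =>
    intro v v'
    rw [hVt x t v htk, hVt x t v' htk]
    refine (abs_min_sub_min_le_max _ _ _ _).trans (max_le (by simp) ?_)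
    refine Finset.abs_inf'_sub_inf'_le _ fun u _ => ?_
    refine abs_weightedSum_sub_weightedSum_le (fun w _ => hp w) hp1 fun w _ => ?_
    exact abs_add_mul_sub_add_mul_le hγ0 hγ1.le (ih _ v v')

/-- **1-Lipschitz continuity in `v`.**  For every `x`, `t ∈ {0,…,k}`, and `v, v′`,
`|V(x,t,v) − V(x,t,v′)| ≤ |v − v′|`. -/
theorem V_one_lipschitz
    {W : Type*} [Fintype W] [Nonempty W] (p : W → ℝ)
    (hp : ∀ w, 0 ≤ p w) (hp1 : ∑ w, p w = 1)
    {X : Type*} (ζ : X)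
    {U : Type*} [Fintype U] [Nonempty U]
    (k : ℕ) (hk : 1 ≤ k)
    (γ : ℝ) (hγ0 : 0 ≤ γ) (hγ1 : γ < 1)
    (h : X → ℕ → U → W → X)
    (g : X → ℕ → U → W → ℝ) (hg : ∀ x t u w, 0 ≤ g x t u w)
    (s : X → ℕ → W → ℝ) (hs : ∀ x t w, 0 ≤ s x t w)
    (hsζ : ∀ t w, s ζ t w = 0)
    (V : X → ℕ → ℝ → ℝ)
    (hVk : ∀ x v, V x k v = v + ∑ w, p w * s x k w)
    (hVt : ∀ x t v, t < k →
      V x t v = min (v + ∑ w, p w * s x t w)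
        (Finset.univ.inf' Finset.univ_nonempty
          (fun u : U => ∑ w, p w * (g x t u w + γ * V (h x t u w) (t + 1) v))))
    (Υ : ℝ → ℝ)
    (hΥ : ∀ v, Υ v = Finset.univ.inf' Finset.univ_nonempty
      (fun u : U => ∑ w, p w * (g ζ 0 u w + γ * V (h ζ 0 u w) 1 v)))
     :
    ∀ x : X, ∀ t ≤ k, ∀ v v' : ℝ, |V x t v - V x t v'| ≤ |v - v'| :=
  V_one_lipschitz_general p hp hp1 k γ hγ0 hγ1 h g s V hVk hVt
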